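/- arXiv:1207.5397 — 4 statements merged into one kernel-verified Lean document; each statement's English description precedes it below -/
import Mathlib

section
/- Let A = AP(ℝ^N) be the algebra of almost periodic continuous functions on ℝ^N: the closure, in the supremum norm, of the set of finite ℂ-linear combinations of the functions y ↦ exp(2πi k·y), k ∈ ℝ^N, inside the bounded continuous functions ℝ^N → ℂ. Then Δ(A) carries the structure of a compact abelian topological group: there exist a continuous multiplication m : Δ(A) × Δ(A) → Δ(A) and a continuous inversion making Δ(A) an abelian topological group with identity φ_0, such that m(φ_y, φ_z) = φ_{y+z} for all y, z ∈ ℝ^N, and the evaluation map y ↦ φ_y is a continuous group homomorphism with dense range. -/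
/-!
A character `t` of `A` acts on `A` by translation, `T_t u (y) = t(u(· + y))` (`translateBy`),
which for the evaluation character `φ_z` is ordinary translation by `z`. On the exponentials
`T_t e_k = t(e_k) e_k`, so `T_t` maps the dense span of the exponentials into itself and is a
contractive algebra endomorphism of `A`; hence `s · t := s ∘ T_t` is a character, with
`(s · t)(e_k) = s(e_k) t(e_k)`, and likewise `t⁻¹ := t ∘ (u ↦ u(-·))` has `t⁻¹(e_k) = t(e_{-k})`.
A character is determined by its values on the exponentials, so the group laws reduce to
identities between these values, and continuity is checked on exponentials and passed to `A` by
uniform approximation. Density of the evaluation characters is Gelfand duality: `A` is a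
commutative C⋆-algebra, so a continuous function on `Δ(A)` vanishing at every `φ_y` is the
Gelfand transform of a function vanishing on `ℝ^N`, hence zero.
-/

open MeasureTheory Filter Topology BoundedContinuousFunction

noncomputable section

/-- The exponential `y ↦ exp(2πi k·y)` as a bounded continuous function `ℝ^N → ℂ`. -/
def expFun {N : ℕ} (k : Fin N → ℝ) : (Fin N → ℝ) →ᵇ ℂ :=
  BoundedContinuousFunction.ofNormedAddCommGroup
    (fun x => Complex.exp ((↑(2 * Real.pi * ∑ i, k i * x i) : ℂ) * Complex.I))
    (by fun_prop) 1
    (fun x => by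
      rw [Complex.norm_exp_ofReal_mul_I])

open Submodule WeakDual

theorem ContinuousLinearMap.mem_closure_span_of_mapsTo {R₁ R₂ E F : Type*} [Semiring R₁]
    [Semiring R₂] {σ : R₁ →+* R₂} [TopologicalSpace E] [AddCommMonoid E] [Module R₁ E]
    [TopologicalSpace F] [AddCommMonoid F] [Module R₂ F] (f : E →SL[σ] F) {s : Set E}
    {t : Set F} (h : Set.MapsTo f s (span R₂ t)) {u : E} (hu : u ∈ closure (span R₁ s : Set E)) :
    f u ∈ closure (span R₂ t : Set F) :=
  map_mem_closure f.continuous hu fun _ hv =>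
    (span_le (p := (span R₂ t).comap (f : E →ₛₗ[σ] F))).2 h hv

theorem LinearMap.continuous_apply_of_dense_span {𝕜 E X V : Type*} [NormedField 𝕜]
    [SeminormedAddCommGroup E] [NormedSpace 𝕜 E] [TopologicalSpace X] [SeminormedAddCommGroup V]
    [NormedSpace 𝕜 V] (F : E →ₗ[𝕜] X → V) (hF : ∀ u x, ‖F u x‖ ≤ ‖u‖) {s : Set E}
    (hs : Dense (span 𝕜 s : Set E)) (hcont : ∀ u ∈ s, Continuous (F u)) (u : E) :
    Continuous (F u) := by
  have hspan : ∀ v ∈ span 𝕜 s, Continuous (F v) := by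
    intro v hv
    induction hv using span_induction with
    | mem v hv => exact hcont v hv
    | zero => rw [map_zero]; exact continuous_const
    | add v w _ _ hv hw => simpa using hv.add hw
    | smul c v _ hv => simpa using hv.const_smul c
  refine continuous_of_uniform_approx_of_continuous fun U hU => ?_
  obtain ⟨ε, hε, hεU⟩ := Metric.mem_uniformity_dist.1 hU
  obtain ⟨v, hv, huv⟩ := hs.exists_dist_lt u hε
  refine ⟨F v, hspan v hv, fun x => hεU ?_⟩
  calc dist (F u x) (F v x) = ‖F (u - v) x‖ := by simp [dist_eq_norm]
    _ ≤ ‖u - v‖ := hF _ x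
    _ < ε := by rwa [← dist_eq_norm]

section Exponentials

variable {N : ℕ}

theorem expFun_apply (k x : Fin N → ℝ) :
    expFun k x = Complex.exp (↑(2 * Real.pi * ∑ i, k i * x i) * Complex.I) := rfl

theorem expFun_add_apply (k y z : Fin N → ℝ) :
    expFun k (y + z) = expFun k y * expFun k z := by
  simp only [expFun_apply, ← Complex.exp_add, ← add_mul, ← Complex.ofReal_add, Pi.add_apply,
    mul_add, Finset.sum_add_distrib]

theorem expFun_apply_zero (k : Fin N → ℝ) : expFun k 0 = 1 := by
  simp [expFun_apply]

theorem expFun_apply_neg (k x : Fin N → ℝ) : expFun k (-x) = expFun (-k) x := by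
  simp [expFun_apply]

theorem star_expFun (k : Fin N → ℝ) : star (expFun k) = expFun (-k) := by
  ext x
  simp [expFun_apply, ← Complex.exp_conj, map_ofNat]

theorem expFun_neg_mul_self (k : Fin N → ℝ) : expFun (-k) * expFun k = 1 := by
  ext x
  simp [expFun_apply, ← Complex.exp_add]

theorem translate_expFun (k y : Fin N → ℝ) :
    (expFun k).compContinuous (Homeomorph.addRight y) = expFun k y • expFun k := by
  ext x
  simp [expFun_add_apply, mul_comm]

theorem reflect_expFun (k : Fin N → ℝ) :
    (expFun k).compContinuous (Homeomorph.neg (Fin N → ℝ)) = expFun (-k) := by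
  ext x
  simp [expFun_apply_neg]

end Exponentials

theorem WeakDual.CharacterSpace.continuous_of_continuous_eval {X 𝕜 B : Type*}
    [TopologicalSpace X] [CommSemiring 𝕜] [TopologicalSpace 𝕜] [ContinuousAdd 𝕜]
    [ContinuousConstSMul 𝕜 𝕜] [NonUnitalNonAssocSemiring B] [TopologicalSpace B] [Module 𝕜 B]
    {f : X → characterSpace 𝕜 B} (h : ∀ b, Continuous fun x => f x b) : Continuous f :=
  continuous_induced_rng.2 (WeakDual.continuous_of_continuous_eval h)

namespace AlmostPeriodic

variable {N : ℕ} {A : Subalgebra ℂ ((Fin N → ℝ) →ᵇ ℂ)}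
  (hA : (A : Set ((Fin N → ℝ) →ᵇ ℂ)) =
    closure (span ℂ (Set.range (expFun (N := N))) : Set ((Fin N → ℝ) →ᵇ ℂ)))
include hA

theorem isClosed : IsClosed (A : Set ((Fin N → ℝ) →ᵇ ℂ)) := hA ▸ isClosed_closure

theorem expFun_mem (k : Fin N → ℝ) : expFun k ∈ A := by
  rw [← SetLike.mem_coe, hA]
  exact subset_closure (subset_span ⟨k, rfl⟩)

theorem mem_closure_span {u : (Fin N → ℝ) →ᵇ ℂ} (hu : u ∈ A) :
    u ∈ closure (span ℂ (Set.range (expFun (N := N))) : Set ((Fin N → ℝ) →ᵇ ℂ)) :=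
  hA ▸ hu

theorem mem_of_mapsTo {E : Type*} [TopologicalSpace E] [AddCommMonoid E] [Module ℂ E]
    {σ : ℂ →+* ℂ} (f : E →SL[σ] (Fin N → ℝ) →ᵇ ℂ) {s : Set E}
    (h : Set.MapsTo f s (span ℂ (Set.range (expFun (N := N))))) {u : E}
    (hu : u ∈ closure (span ℂ s : Set E)) : f u ∈ A := by
  rw [← SetLike.mem_coe, hA]
  exact f.mem_closure_span_of_mapsTo h hu

theorem compContinuous_mem {g : C(Fin N → ℝ, Fin N → ℝ)}
    (hg : ∀ k, (expFun k).compContinuous g ∈ span ℂ (Set.range (expFun (N := N))))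
    {u : (Fin N → ℝ) →ᵇ ℂ} (hu : u ∈ A) : u.compContinuous g ∈ A :=
  mem_of_mapsTo hA (compContinuousCLM ℂ ℂ g) (Set.forall_mem_range.2 hg)
    (mem_closure_span hA hu)

theorem star_mem {u : (Fin N → ℝ) →ᵇ ℂ} (hu : u ∈ A) : star u ∈ A :=
  mem_of_mapsTo hA (starL ℂ (A := (Fin N → ℝ) →ᵇ ℂ)).toContinuousLinearMap
    (Set.forall_mem_range.2 fun k => by
      simpa [star_expFun] using subset_span (Set.mem_range_self (-k)))
    (mem_closure_span hA hu)

def exp (k : Fin N → ℝ) : A := ⟨expFun k, expFun_mem hA k⟩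

theorem dense_span_exp : Dense (span ℂ (Set.range (exp hA)) : Set A) := by
  rw [(Topology.IsInducing.subtypeVal :
    Topology.IsInducing ((↑) : A → (Fin N → ℝ) →ᵇ ℂ)).dense_iff]
  intro u
  convert mem_closure_span hA u.2 using 2
  have := Submodule.map_span (Subalgebra.toSubmodule A).subtype (Set.range (exp hA))
  rw [← Set.range_comp] at this
  exact congrArg SetLike.coe this

theorem norm_apply_le (t : characterSpace ℂ A) (u : A) : ‖t u‖ ≤ ‖u‖ := by
  have : CompleteSpace A := (isClosed hA).completeSpace_coe
  have h1 : ‖(1 : A)‖ = 1 := norm_one (α := (Fin N → ℝ) →ᵇ ℂ)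
  exact (spectrum.norm_le_norm_mul_of_mem (CharacterSpace.apply_mem_spectrum t u)).trans_eq
    (by rw [h1, mul_one])

theorem char_ext {s t : characterSpace ℂ A} (h : ∀ k, s (exp hA k) = t (exp hA k)) : s = t := by
  have := ContinuousLinearMap.ext_on (dense_span_exp hA) (f := CharacterSpace.toCLM s)
    (g := CharacterSpace.toCLM t) (Set.forall_mem_range.2 h)
  ext u
  exact DFunLike.congr_fun this u

def compContinuous {g : C(Fin N → ℝ, Fin N → ℝ)}
    (hg : ∀ k, (expFun k).compContinuous g ∈ span ℂ (Set.range (expFun (N := N)))) :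
    A →ₐ[ℂ] A where
  toFun u := ⟨(u : (Fin N → ℝ) →ᵇ ℂ).compContinuous g, compContinuous_mem hA hg u.2⟩
  map_one' := rfl
  map_mul' _ _ := rfl
  map_zero' := rfl
  map_add' _ _ := rfl
  commutes' _ := rfl

def translate (y : Fin N → ℝ) : A →ₐ[ℂ] A :=
  compContinuous hA (g := Homeomorph.addRight y) fun k => by
    rw [translate_expFun]
    exact smul_mem _ _ (subset_span (Set.mem_range_self k))

def reflect : A →ₐ[ℂ] A :=
  compContinuous hA (g := Homeomorph.neg (Fin N → ℝ)) fun k => by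
    rw [reflect_expFun]
    exact subset_span (Set.mem_range_self (-k))

theorem translate_exp (y k : Fin N → ℝ) : translate hA y (exp hA k) = expFun k y • exp hA k :=
  Subtype.ext (translate_expFun k y)

theorem reflect_exp (k : Fin N → ℝ) : reflect hA (exp hA k) = exp hA (-k) :=
  Subtype.ext (reflect_expFun k)

theorem norm_apply_translate_le (t : characterSpace ℂ A) (u : A) (y : Fin N → ℝ) :
    ‖t (translate hA y u)‖ ≤ ‖u‖ :=
  (norm_apply_le hA t _).trans (norm_compContinuous_le _ _)

theorem continuous_apply_translate (t : characterSpace ℂ A) (u : A) :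
    Continuous fun y => t (translate hA y u) :=
  (LinearMap.pi fun y => (CharacterSpace.toCLM t).toLinearMap ∘ₗ (translate hA y).toLinearMap
    ).continuous_apply_of_dense_span
    (norm_apply_translate_le hA t) (dense_span_exp hA)
    (Set.forall_mem_range.2 fun k => by
      show Continuous fun y => t (translate hA y (exp hA k))
      simp only [translate_exp, map_smul, smul_eq_mul]
      exact (expFun k).continuous.mul continuous_const) u

def translateByCLM (t : characterSpace ℂ A) : A →L[ℂ] (Fin N → ℝ) →ᵇ ℂ :=
  LinearMap.mkContinuous
    { toFun u := .ofNormedAddCommGroup (fun y => t (translate hA y u))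
        (continuous_apply_translate hA t u) ‖u‖ (norm_apply_translate_le hA t u)
      map_add' u v := ext fun y => by
        change t (translate hA y (u + v)) = t (translate hA y u) + t (translate hA y v)
        rw [map_add, map_add]
      map_smul' c u := ext fun y => by
        change t (translate hA y (c • u)) = c • t (translate hA y u)
        rw [map_smul, map_smul] }
    1 fun u => by
      rw [one_mul]
      exact norm_ofNormedAddCommGroup_le _ (norm_nonneg u) (norm_apply_translate_le hA t u)

theorem translateByCLM_apply (t : characterSpace ℂ A) (u : A) (y : Fin N → ℝ) :
    translateByCLM hA t u y = t (translate hA y u) := rfl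

theorem translateByCLM_exp (t : characterSpace ℂ A) (k : Fin N → ℝ) :
    translateByCLM hA t (exp hA k) = t (exp hA k) • expFun k := by
  ext y
  simp [translateByCLM_apply, translate_exp, mul_comm]

theorem translateByCLM_mem (t : characterSpace ℂ A) (u : A) : translateByCLM hA t u ∈ A :=
  mem_of_mapsTo hA (translateByCLM hA t)
    (Set.forall_mem_range.2 fun k => by
      rw [translateByCLM_exp]
      exact smul_mem _ _ (subset_span (Set.mem_range_self k)))
    (dense_span_exp hA u)

def translateBy (t : characterSpace ℂ A) : A →ₐ[ℂ] A where
  toFun u := ⟨translateByCLM hA t u, translateByCLM_mem hA t u⟩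
  map_one' := Subtype.ext <| ext fun y => by simp [translateByCLM_apply]
  map_mul' u v := Subtype.ext <| ext fun y => by simp [translateByCLM_apply]
  map_zero' := Subtype.ext <| ext fun y => by simp
  map_add' u v := Subtype.ext <| ext fun y => by simp [translateByCLM_apply]
  commutes' c := Subtype.ext <| ext fun y => by
    simp [translateByCLM_apply, AlgHomClass.commutes]

theorem norm_translateBy_le (t : characterSpace ℂ A) (u : A) : ‖translateBy hA t u‖ ≤ ‖u‖ :=
  norm_ofNormedAddCommGroup_le _ (norm_nonneg u) (norm_apply_translate_le hA t u)

theorem translateBy_exp (t : characterSpace ℂ A) (k : Fin N → ℝ) :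
    translateBy hA t (exp hA k) = t (exp hA k) • exp hA k :=
  Subtype.ext (translateByCLM_exp hA t k)

def character (φ : A →ₐ[ℂ] ℂ) : characterSpace ℂ A :=
  have : CompleteSpace A := (isClosed hA).completeSpace_coe
  CharacterSpace.equivAlgHom.symm φ

omit hA in
def evalAlgHom (y : Fin N → ℝ) : A →ₐ[ℂ] ℂ where
  toFun u := (u : (Fin N → ℝ) →ᵇ ℂ) y
  map_one' := rfl
  map_mul' _ _ := rfl
  map_zero' := rfl
  map_add' _ _ := rfl
  commutes' _ := rfl

def evalChar (y : Fin N → ℝ) : characterSpace ℂ A := character hA (evalAlgHom y)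

def mulChar (s t : characterSpace ℂ A) : characterSpace ℂ A :=
  character hA ((CharacterSpace.toAlgHom s).comp (translateBy hA t))

def invChar (t : characterSpace ℂ A) : characterSpace ℂ A :=
  character hA ((CharacterSpace.toAlgHom t).comp (reflect hA))

theorem evalChar_apply (y : Fin N → ℝ) (u : A) :
    evalChar hA y u = (u : (Fin N → ℝ) →ᵇ ℂ) y := rfl

theorem mulChar_apply (s t : characterSpace ℂ A) (u : A) :
    mulChar hA s t u = s (translateBy hA t u) := rfl

theorem invChar_apply (t : characterSpace ℂ A) (u : A) : invChar hA t u = t (reflect hA u) := rfl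

theorem evalChar_exp (y k : Fin N → ℝ) : evalChar hA y (exp hA k) = expFun k y := rfl

theorem mulChar_exp (s t : characterSpace ℂ A) (k : Fin N → ℝ) :
    mulChar hA s t (exp hA k) = s (exp hA k) * t (exp hA k) := by
  rw [mulChar_apply, translateBy_exp, map_smul, smul_eq_mul, mul_comm]

theorem invChar_exp (t : characterSpace ℂ A) (k : Fin N → ℝ) :
    invChar hA t (exp hA k) = t (exp hA (-k)) := by
  rw [invChar_apply, reflect_exp]

theorem exp_neg_mul_exp (k : Fin N → ℝ) : exp hA (-k) * exp hA k = 1 :=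
  Subtype.ext (expFun_neg_mul_self k)

theorem continuous_mulChar :
    Continuous fun p : characterSpace ℂ A × characterSpace ℂ A => mulChar hA p.1 p.2 :=
  CharacterSpace.continuous_of_continuous_eval fun u =>
    (LinearMap.pi fun p : characterSpace ℂ A × characterSpace ℂ A =>
      (CharacterSpace.toCLM p.1).toLinearMap ∘ₗ (translateBy hA p.2).toLinearMap
      ).continuous_apply_of_dense_span
      (fun u p => (norm_apply_le hA p.1 _).trans (norm_translateBy_le hA p.2 u))
      (dense_span_exp hA)
      (Set.forall_mem_range.2 fun k => by
        show Continuous fun p : characterSpace ℂ A × characterSpace ℂ A =>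
          p.1 (translateBy hA p.2 (exp hA k))
        simp only [translateBy_exp, map_smul, smul_eq_mul]
        exact ((gelfandTransform ℂ A _).continuous.comp continuous_snd).mul
          ((gelfandTransform ℂ A _).continuous.comp continuous_fst)) u

theorem continuous_invChar : Continuous (invChar hA) :=
  CharacterSpace.continuous_of_continuous_eval fun u =>
    (gelfandTransform ℂ A (reflect hA u)).continuous

theorem continuous_evalChar : Continuous (evalChar hA) :=
  CharacterSpace.continuous_of_continuous_eval fun u => (u : (Fin N → ℝ) →ᵇ ℂ).continuous

theorem gelfandTransform_surjective : Function.Surjective (gelfandTransform ℂ A) := by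
  let S : StarSubalgebra ℂ ((Fin N → ℝ) →ᵇ ℂ) := { A with star_mem' := star_mem hA }
  have : IsClosed (S : Set ((Fin N → ℝ) →ᵇ ℂ)) := isClosed hA
  let : CommCStarAlgebra A := StarSubalgebra.commCStarAlgebra S
  exact (gelfandTransform_bijective A).2

theorem denseRange_evalChar : DenseRange (evalChar hA) := by
  have : CompleteSpace A := (isClosed hA).completeSpace_coe
  refine dense_iff_closure_eq.2 (Set.eq_univ_of_forall fun s₀ => ?_)
  by_contra hs₀
  obtain ⟨f, hf0, hf1, -⟩ := exists_continuous_zero_one_of_isClosed isClosed_closure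
    isClosed_singleton (Set.disjoint_singleton_right.2 hs₀)
  obtain ⟨u, hu⟩ := gelfandTransform_surjective hA
    (ContinuousMap.comp ⟨Complex.ofReal, Complex.continuous_ofReal⟩ f)
  have hu0 : u = 0 := Subtype.ext <| ext fun y => by
    simpa [evalChar_apply, hf0 (subset_closure (Set.mem_range_self y))]
      using congr($hu (evalChar hA y))
  simpa [hu0, hf1 rfl] using congr($hu s₀)

end AlmostPeriodic

open AlmostPeriodic in
/-- If `A = AP(ℝ^N)` is the algebra of almost periodic continuous functions (the sup-norm
closure of the span of the exponentials `y ↦ exp(2πi k·y)`, `k ∈ ℝ^N`), then the spectrum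
`Δ(A)` is a compact abelian topological group: it carries a continuous commutative group
structure with identity the evaluation character `φ_0`, for which `φ_y · φ_z = φ_{y+z}`,
and the evaluation map `y ↦ φ_y` is a continuous homomorphism with dense range. -/
theorem stmt3 {N : ℕ} (A : Subalgebra ℂ ((Fin N → ℝ) →ᵇ ℂ))
    (hA : (A : Set ((Fin N → ℝ) →ᵇ ℂ)) =
      closure ((Submodule.span ℂ (Set.range (expFun (N := N))) : Submodule ℂ _) :
        Set ((Fin N → ℝ) →ᵇ ℂ))) :
    ∃ (φ : (Fin N → ℝ) → WeakDual.characterSpace ℂ A)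
      (m : WeakDual.characterSpace ℂ A → WeakDual.characterSpace ℂ A →
        WeakDual.characterSpace ℂ A)
      (inv : WeakDual.characterSpace ℂ A → WeakDual.characterSpace ℂ A),
      (∀ (y : Fin N → ℝ) (u : A), (φ y) u = (u : (Fin N → ℝ) →ᵇ ℂ) y) ∧
      Continuous (fun p : WeakDual.characterSpace ℂ A × WeakDual.characterSpace ℂ A =>
        m p.1 p.2) ∧
      Continuous inv ∧
      (∀ a b c, m (m a b) c = m a (m b c)) ∧
      (∀ a b, m a b = m b a) ∧
      (∀ a, m (φ 0) a = a) ∧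
      (∀ a, m (inv a) a = φ 0) ∧
      (∀ y z : Fin N → ℝ, m (φ y) (φ z) = φ (y + z)) ∧
      Continuous φ ∧ DenseRange φ := by
  refine ⟨evalChar hA, mulChar hA, invChar hA, evalChar_apply hA, continuous_mulChar hA,
    continuous_invChar hA, fun a b c => ?_, fun a b => ?_, fun a => ?_, fun a => ?_,
    fun y z => ?_, continuous_evalChar hA, denseRange_evalChar hA⟩ <;>
    refine char_ext hA fun k => ?_
  · simp only [mulChar_exp, mul_assoc]
  · simp only [mulChar_exp, mul_comm]
  · rw [mulChar_exp, evalChar_exp, expFun_apply_zero, one_mul]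
  · rw [mulChar_exp, invChar_exp, ← map_mul, exp_neg_mul_exp, map_one, evalChar_exp,
      expFun_apply_zero]
  · rw [mulChar_exp, evalChar_exp, evalChar_exp, evalChar_exp, expFun_add_apply]
end
end

section
/- Let 1 < p < ∞ and set s = min(p − 1, 1). Then there exists a constant c > 0, depending only on p, such that for all real numbers a, b and every t ∈ ℝ with |t| ≤ 1: 0 ≤ |a + t b|^p − |a|^p − p t |a|^{p−2} a b ≤ c |t|^{1+s} (|a|^p + |b|^p), where |a|^{p−2} a is understood to equal 0 when a = 0. -/
/-!
Write `ψ x = |x| ^ (p - 2) * x` and `R a u = |a + u| ^ p - |a| ^ p - p * ψ a * u`. Convexity of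
`|·| ^ p` (Bernoulli's inequality) gives `0 ≤ R`, and the same tangent-line bound taken at `a + u`
gives `R a u ≤ p * (ψ (a + u) - ψ a) * u`. The monotonicity defect `(ψ x - ψ y) (x - y)` is at most
`2 |x - y| ^ p` for `p ≤ 2` (subadditivity of `r ↦ r ^ (p - 1)`) and at most
`(p - 1) (|x| + |y|) ^ (p - 2) (x - y) ^ 2` for `2 ≤ p` (convexity of `r ↦ r ^ (p - 1)`).
For `u = t b` with `|t| ≤ 1` these are `O(|t| ^ p |b| ^ p)` and `O(t ^ 2 (|a| ^ p + |b| ^ p))`.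
-/

noncomputable section

open Real

/-- The derivative of `|x| ^ p / p`. -/
def signedPow (p x : ℝ) : ℝ := |x| ^ (p - 2) * x

def powRemainder (p a u : ℝ) : ℝ := |a + u| ^ p - |a| ^ p - p * signedPow p a * u

section

variable {p q x y : ℝ}

lemma signedPow_neg (p x : ℝ) : signedPow p (-x) = -signedPow p x := by
  rw [signedPow, signedPow, abs_neg, mul_neg]

lemma signedPow_of_pos (hx : 0 < x) : signedPow p x = x ^ (p - 1) := by
  rw [signedPow, abs_of_pos hx, ← rpow_add_one hx.ne']
  congr 1
  ring

lemma signedPow_of_nonneg (hp : p ≠ 1) (hx : 0 ≤ x) : signedPow p x = x ^ (p - 1) := by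
  rcases hx.eq_or_lt with rfl | hx
  · simp [signedPow, zero_rpow (sub_ne_zero.2 hp)]
  · exact signedPow_of_pos hx

lemma signedPow_of_nonpos (hp : p ≠ 1) (hx : x ≤ 0) : signedPow p x = -(-x) ^ (p - 1) := by
  rw [← signedPow_of_nonneg hp (neg_nonneg.2 hx), signedPow_neg, neg_neg]

lemma rpow_sub_one_mul_self (hx : 0 ≤ x) (hp : p ≠ 0) : x ^ (p - 1) * x = x ^ p := by
  rw [← rpow_add_one' hx (by rwa [sub_add_cancel]), sub_add_cancel]

lemma rpow_add_mul_rpow_sub_one_le (hp : 1 ≤ p) (hx : 0 < x) (u : ℝ) :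
    x ^ p + p * x ^ (p - 1) * u ≤ |x + u| ^ p := by
  have hs : -1 ≤ |x + u| / x - 1 := by
    have := div_nonneg (abs_nonneg (x + u)) hx.le
    linarith
  have hb := one_add_mul_self_le_rpow_one_add hs hp
  rw [add_sub_cancel, div_rpow (abs_nonneg _) hx.le, le_div_iff₀ (rpow_pos_of_pos hx p)] at hb
  have hpos : 0 ≤ p * x ^ (p - 1) := by positivity
  calc x ^ p + p * x ^ (p - 1) * u ≤ x ^ p + p * x ^ (p - 1) * (|x + u| - x) := by
        gcongr
        linarith [le_abs_self (x + u)]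
    _ = (1 + p * (|x + u| / x - 1)) * x ^ p := by
        rw [← rpow_sub_one_mul_self hx.le (by linarith : p ≠ 0)]
        field_simp
    _ ≤ |x + u| ^ p := hb

lemma abs_rpow_add_mul_signedPow_le (hp : 1 ≤ p) (a u : ℝ) :
    |a| ^ p + p * signedPow p a * u ≤ |a + u| ^ p := by
  wlog ha : 0 ≤ a generalizing a u
  · have h := this (-a) (-u) (by linarith)
    rw [abs_neg, signedPow_neg, ← neg_add, abs_neg] at h
    linarith
  rcases ha.eq_or_lt with rfl | ha
  · simp [signedPow, zero_rpow (by linarith : p ≠ 0)]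
    positivity
  · rw [signedPow_of_pos ha, abs_of_pos ha]
    exact rpow_add_mul_rpow_sub_one_le hp ha u

lemma powRemainder_nonneg (hp : 1 ≤ p) (a u : ℝ) : 0 ≤ powRemainder p a u := by
  have := abs_rpow_add_mul_signedPow_le hp a u
  rw [powRemainder]
  linarith

lemma powRemainder_le (hp : 1 ≤ p) (a u : ℝ) :
    powRemainder p a u ≤ p * ((signedPow p (a + u) - signedPow p a) * u) := by
  have := abs_rpow_add_mul_signedPow_le hp (a + u) (-u)
  rw [add_neg_cancel_right] at this
  rw [powRemainder]
  linear_combination this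

lemma rpow_sub_rpow_mul_sub_le_of_le_one (hq₀ : 0 ≤ q) (hq₁ : q ≤ 1) (hx : 0 ≤ x) (hy : 0 ≤ y) :
    (x ^ q - y ^ q) * (x - y) ≤ |x - y| ^ q * |x - y| := by
  wlog hxy : y ≤ x generalizing x y
  · calc (x ^ q - y ^ q) * (x - y) = (y ^ q - x ^ q) * (y - x) := by ring
      _ ≤ |y - x| ^ q * |y - x| := this hy hx (le_of_not_ge hxy)
      _ = |x - y| ^ q * |x - y| := by rw [abs_sub_comm]
  have hxy' := sub_nonneg.2 hxy
  have h := rpow_add_le_add_rpow hy hxy' hq₀ hq₁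
  rw [add_sub_cancel] at h
  rw [abs_of_nonneg hxy']
  exact mul_le_mul_of_nonneg_right (by linarith) hxy'

lemma rpow_sub_rpow_mul_sub_le_of_one_le (hq : 1 ≤ q) (hx : 0 ≤ x) (hy : 0 ≤ y) :
    (x ^ q - y ^ q) * (x - y) ≤ q * (x + y) ^ (q - 1) * (x - y) ^ 2 := by
  wlog hxy : y < x generalizing x y
  · rcases (not_lt.1 hxy).eq_or_lt with rfl | hlt
    · simp
    · calc (x ^ q - y ^ q) * (x - y) = (y ^ q - x ^ q) * (y - x) := by ring
        _ ≤ q * (y + x) ^ (q - 1) * (y - x) ^ 2 := this hy hx hlt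
        _ = q * (x + y) ^ (q - 1) * (x - y) ^ 2 := by rw [add_comm y x]; ring
  have h := rpow_add_mul_rpow_sub_one_le hq (hy.trans_lt hxy) (y - x)
  rw [add_sub_cancel, abs_of_nonneg hy] at h
  calc (x ^ q - y ^ q) * (x - y) ≤ q * x ^ (q - 1) * (x - y) * (x - y) := by
        gcongr; linarith
    _ ≤ q * (x + y) ^ (q - 1) * (x - y) ^ 2 := by
        rw [mul_assoc _ (x - y), ← sq]
        gcongr; linarith

lemma signedPow_sub_mul_sub_le_of_le_two (hp₁ : 1 < p) (hp₂ : p ≤ 2) (x y : ℝ) :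
    (signedPow p x - signedPow p y) * (x - y) ≤ 2 * |x - y| ^ p := by
  wlog hy : 0 ≤ y generalizing x y
  · calc (signedPow p x - signedPow p y) * (x - y)
          = (signedPow p (-x) - signedPow p (-y)) * (-x - -y) := by
            rw [signedPow_neg, signedPow_neg]; ring
      _ ≤ 2 * |-x - -y| ^ p := this (-x) (-y) (by linarith)
      _ = 2 * |x - y| ^ p := by rw [← neg_sub, abs_neg, neg_sub_neg]
  have hp : p ≠ 0 := by linarith
  rcases le_total 0 x with hx | hx
  · rw [signedPow_of_nonneg hp₁.ne' hx, signedPow_of_nonneg hp₁.ne' hy,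
      ← rpow_sub_one_mul_self (abs_nonneg _) hp]
    have := rpow_sub_rpow_mul_sub_le_of_le_one (q := p - 1) (by linarith) (by linarith) hx hy
    have : 0 ≤ |x - y| ^ (p - 1) * |x - y| := by positivity
    linarith
  · have hxy : |x - y| = -x + y := by rw [abs_of_nonpos (by linarith)]; ring
    rw [signedPow_of_nonpos hp₁.ne' hx, signedPow_of_nonneg hp₁.ne' hy, hxy,
      ← rpow_sub_one_mul_self (by linarith) hp]
    have h₁ : (-x) ^ (p - 1) ≤ (-x + y) ^ (p - 1) := by gcongr <;> linarith
    have h₂ : y ^ (p - 1) ≤ (-x + y) ^ (p - 1) := by gcongr; linarith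
    calc (-(-x) ^ (p - 1) - y ^ (p - 1)) * (x - y)
          = ((-x) ^ (p - 1) + y ^ (p - 1)) * (-x + y) := by ring
      _ ≤ ((-x + y) ^ (p - 1) + (-x + y) ^ (p - 1)) * (-x + y) := by gcongr; linarith
      _ = 2 * ((-x + y) ^ (p - 1) * (-x + y)) := by ring

lemma signedPow_sub_mul_sub_le_of_two_le (hp : 2 ≤ p) (x y : ℝ) :
    (signedPow p x - signedPow p y) * (x - y) ≤ (p - 1) * (|x| + |y|) ^ (p - 2) * (x - y) ^ 2 := by
  wlog hy : 0 ≤ y generalizing x y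
  · calc (signedPow p x - signedPow p y) * (x - y)
          = (signedPow p (-x) - signedPow p (-y)) * (-x - -y) := by
            rw [signedPow_neg, signedPow_neg]; ring
      _ ≤ (p - 1) * (|-x| + |-y|) ^ (p - 2) * (-x - -y) ^ 2 := this (-x) (-y) (by linarith)
      _ = (p - 1) * (|x| + |y|) ^ (p - 2) * (x - y) ^ 2 := by rw [abs_neg, abs_neg]; ring
  have hp₁ : p ≠ 1 := by linarith
  rcases le_total 0 x with hx | hx
  · rw [signedPow_of_nonneg hp₁ hx, signedPow_of_nonneg hp₁ hy, abs_of_nonneg hx, abs_of_nonneg hy,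
      show p - 2 = p - 1 - 1 by ring]
    exact rpow_sub_rpow_mul_sub_le_of_one_le (by linarith) hx hy
  · rw [signedPow_of_nonpos hp₁ hx, signedPow_of_nonneg hp₁ hy, abs_of_nonpos hx, abs_of_nonneg hy]
    have h := add_rpow_le_rpow_add (neg_nonneg.2 hx) hy (by linarith : 1 ≤ p - 1)
    rw [← rpow_sub_one_mul_self (by linarith : 0 ≤ -x + y) (by linarith : p - 1 ≠ 0),
      show p - 1 - 1 = p - 2 by ring] at h
    have : 0 ≤ (-x + y) ^ (p - 2) * (x - y) ^ 2 :=
      mul_nonneg (rpow_nonneg (by linarith) _) (sq_nonneg _)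
    calc (-(-x) ^ (p - 1) - y ^ (p - 1)) * (x - y)
          = ((-x) ^ (p - 1) + y ^ (p - 1)) * (-x + y) := by ring
      _ ≤ (-x + y) ^ (p - 2) * (-x + y) * (-x + y) := by gcongr; linarith
      _ ≤ (p - 1) * (-x + y) ^ (p - 2) * (x - y) ^ 2 := by nlinarith

lemma powRemainder_le_of_le_two (hp₁ : 1 < p) (hp₂ : p ≤ 2) (a u : ℝ) :
    powRemainder p a u ≤ 2 * p * |u| ^ p := by
  have h := signedPow_sub_mul_sub_le_of_le_two hp₁ hp₂ (a + u) a
  rw [add_sub_cancel_left] at h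
  calc powRemainder p a u ≤ p * ((signedPow p (a + u) - signedPow p a) * u) :=
        powRemainder_le hp₁.le a u
    _ ≤ p * (2 * |u| ^ p) := by gcongr
    _ = 2 * p * |u| ^ p := by ring

lemma powRemainder_le_of_two_le (hp : 2 ≤ p) (a u : ℝ) :
    powRemainder p a u ≤ p * (p - 1) * (|a + u| + |a|) ^ (p - 2) * u ^ 2 := by
  have h := signedPow_sub_mul_sub_le_of_two_le hp (a + u) a
  rw [add_sub_cancel_left] at h
  calc powRemainder p a u ≤ p * ((signedPow p (a + u) - signedPow p a) * u) :=
        powRemainder_le (by linarith) a u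
    _ ≤ p * ((p - 1) * (|a + u| + |a|) ^ (p - 2) * u ^ 2) := by gcongr
    _ = p * (p - 1) * (|a + u| + |a|) ^ (p - 2) * u ^ 2 := by ring

lemma two_mul_abs_add_abs_rpow_mul_sq_le (hp : 2 ≤ p) (a b : ℝ) :
    (2 * |a| + |b|) ^ (p - 2) * b ^ 2 ≤ 3 ^ (p - 2) * (|a| ^ p + |b| ^ p) := by
  set m := max |a| |b| with hm_def
  have hm : 0 ≤ m := (abs_nonneg a).trans (le_max_left _ _)
  have h₁ : (2 * |a| + |b|) ^ (p - 2) ≤ 3 ^ (p - 2) * m ^ (p - 2) := by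
    rw [← mul_rpow (by norm_num) hm]
    gcongr
    linarith [le_max_left |a| |b|, le_max_right |a| |b|]
  have h₂ : b ^ 2 ≤ m ^ 2 := by
    rw [← sq_abs]
    gcongr
    exact le_max_right _ _
  have h₃ : m ^ (p - 2) * m ^ 2 = m ^ p := by
    rw [← rpow_add_natCast' hm (by push_cast; linarith)]
    push_cast
    ring_nf
  have h₄ : m ^ p ≤ |a| ^ p + |b| ^ p := by
    have := rpow_nonneg (abs_nonneg a) p
    have := rpow_nonneg (abs_nonneg b) p
    rcases max_choice |a| |b| with h | h <;> rw [hm_def, h] <;> linarith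
  calc (2 * |a| + |b|) ^ (p - 2) * b ^ 2 ≤ 3 ^ (p - 2) * m ^ (p - 2) * m ^ 2 := by gcongr
    _ = 3 ^ (p - 2) * m ^ p := by rw [mul_assoc, h₃]
    _ ≤ 3 ^ (p - 2) * (|a| ^ p + |b| ^ p) := by gcongr

lemma powRemainder_mul_le_of_le_two (hp₁ : 1 < p) (hp₂ : p ≤ 2) (a b t : ℝ) :
    powRemainder p a (t * b) ≤ 2 * p * |t| ^ (1 + min (p - 1) 1) * (|a| ^ p + |b| ^ p) := by
  rw [min_eq_left (by linarith), add_sub_cancel]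
  calc powRemainder p a (t * b) ≤ 2 * p * |t * b| ^ p := powRemainder_le_of_le_two hp₁ hp₂ a _
    _ = 2 * p * |t| ^ p * |b| ^ p := by rw [abs_mul, mul_rpow (abs_nonneg _) (abs_nonneg _)]; ring
    _ ≤ 2 * p * |t| ^ p * (|a| ^ p + |b| ^ p) := by
        gcongr
        exact le_add_of_nonneg_left (by positivity)

lemma powRemainder_mul_le_of_two_le (hp : 2 ≤ p) (a b : ℝ) {t : ℝ} (ht : |t| ≤ 1) :
    powRemainder p a (t * b) ≤
      p * (p - 1) * 3 ^ (p - 2) * |t| ^ (1 + min (p - 1) 1) * (|a| ^ p + |b| ^ p) := by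
  rw [min_eq_right (by linarith), one_add_one_eq_two, rpow_two, sq_abs]
  have hab : |a + t * b| + |a| ≤ 2 * |a| + |b| := by
    have : |t * b| ≤ |b| := by rw [abs_mul]; exact mul_le_of_le_one_left (abs_nonneg b) ht
    linarith [abs_add_le a (t * b)]
  have hp₀ : 0 ≤ p * (p - 1) := by nlinarith
  calc powRemainder p a (t * b) ≤ p * (p - 1) * (|a + t * b| + |a|) ^ (p - 2) * (t * b) ^ 2 :=
        powRemainder_le_of_two_le hp a _
    _ ≤ p * (p - 1) * (2 * |a| + |b|) ^ (p - 2) * (t * b) ^ 2 := by gcongr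
    _ = p * (p - 1) * t ^ 2 * ((2 * |a| + |b|) ^ (p - 2) * b ^ 2) := by ring
    _ ≤ p * (p - 1) * t ^ 2 * (3 ^ (p - 2) * (|a| ^ p + |b| ^ p)) := by
        exact mul_le_mul_of_nonneg_left (two_mul_abs_add_abs_rpow_mul_sq_le hp a b)
          (mul_nonneg hp₀ (sq_nonneg t))
    _ = p * (p - 1) * 3 ^ (p - 2) * t ^ 2 * (|a| ^ p + |b| ^ p) := by ring

end

/-- For `1 < p < ∞` and `s = min(p−1, 1)`, there is a constant `c > 0` depending only on `p`
such that for all reals `a, b` and all `|t| ≤ 1`: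
`0 ≤ |a + tb|^p − |a|^p − p t |a|^{p−2} a b ≤ c |t|^{1+s} (|a|^p + |b|^p)`. -/
theorem stmt8 (p : ℝ) (hp : 1 < p) :
    ∃ c : ℝ, 0 < c ∧ ∀ a b t : ℝ, |t| ≤ 1 →
      0 ≤ |a + t * b| ^ p - |a| ^ p - p * t * (|a| ^ (p - 2) * a) * b ∧
      |a + t * b| ^ p - |a| ^ p - p * t * (|a| ^ (p - 2) * a) * b ≤
        c * |t| ^ (1 + min (p - 1) 1) * (|a| ^ p + |b| ^ p) := by
  refine ⟨max (2 * p) (p * (p - 1) * 3 ^ (p - 2)), lt_max_of_lt_left (by linarith),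
    fun a b t ht => ?_⟩
  have hR : |a + t * b| ^ p - |a| ^ p - p * t * (|a| ^ (p - 2) * a) * b =
      powRemainder p a (t * b) := by
    rw [powRemainder, signedPow]
    ring
  rw [hR]
  refine ⟨powRemainder_nonneg hp.le a _, ?_⟩
  rcases le_total p 2 with hp₂ | hp₂
  · calc powRemainder p a (t * b) ≤ 2 * p * |t| ^ (1 + min (p - 1) 1) * (|a| ^ p + |b| ^ p) :=
          powRemainder_mul_le_of_le_two hp hp₂ a b t
      _ ≤ _ := by gcongr; exact le_max_left _ _
  · calc powRemainder p a (t * b) ≤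
          p * (p - 1) * 3 ^ (p - 2) * |t| ^ (1 + min (p - 1) 1) * (|a| ^ p + |b| ^ p) :=
          powRemainder_mul_le_of_two_le hp₂ a b ht
      _ ≤ _ := by gcongr; exact le_max_right _ _
end
end

section
/- Let (Y, 𝔐, μ) be a σ-finite measure space, let F₁ and F₂ be separable Banach spaces, and let 1 ≤ p, r < ∞. Let g : Y × F₁ → F₂ be a Carathéodory mapping: for every v ∈ F₁ the map y ↦ g(y, v) is strongly μ-measurable, and for μ-almost every y ∈ Y the map v ↦ g(y, v) is continuous. Assume that for every u ∈ L^p(Y, μ; F₁) the function y ↦ g(y, u(y)) belongs to L^r(Y, μ; F₂). Then the superposition (Nemytskii) operator G : L^p(Y, μ; F₁) → L^r(Y, μ; F₂), G(u)(y) = g(y, u(y)), is continuous for the norm topologies. -/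
/-!
Continuity is sequential, and by the subsequence principle it suffices to treat a sequence
`vₙ → u` in `Lᵖ` with `∑ₙ ‖vₙ - u‖ₚᵖ < ∞` and `vₙ → u` a.e. Then `g(·, vₙ) → g(·, u)` a.e.,
so `H = supₙ ‖g(·, vₙ)‖` is finite a.e. Choosing measurably an index `k(y)` with
`H(y) ≤ 2 ‖g(y, v_{k(y)}(y))‖` produces `w(y) = v_{k(y)}(y)`, which lies in `Lᵖ` because
`‖w - u‖ᵖ ≤ ∑ₙ ‖vₙ - u‖ᵖ`. Hence `2 ‖g(·, w)‖ ∈ Lʳ` dominates `H`, and dominated convergence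
in `Lʳ` concludes.
-/

open MeasureTheory Filter Topology
open scoped ENNReal

section

variable {Y : Type*} [MeasurableSpace Y] {μ : Measure Y}

theorem exists_measurable_index_iSup_le_two_mul {f : ℕ → Y → ℝ≥0∞} (hf : ∀ n, Measurable (f n)) :
    ∃ k : Y → ℕ, Measurable k ∧ ∀ y, ⨆ n, f n y < ∞ → ⨆ n, f n y ≤ 2 * f (k y) y := by
  classical
  have hex : ∀ y, ∃ n, ⨆ m, f m y < ∞ → ⨆ m, f m y ≤ 2 * f n y := by
    intro y
    by_cases h0 : ⨆ m, f m y = 0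
    · exact ⟨0, fun _ => by simp [h0]⟩
    by_cases htop : ⨆ m, f m y = ∞
    · exact ⟨0, fun h => absurd htop h.ne⟩
    obtain ⟨n, hn⟩ := lt_iSup_iff.1 (ENNReal.half_lt_self h0 htop)
    refine ⟨n, fun _ => ?_⟩
    rw [mul_comm]
    exact (ENNReal.div_le_iff_le_mul (by simp) (by simp)).1 hn.le
  have hsup : Measurable fun y => ⨆ m, f m y := Measurable.iSup hf
  refine ⟨fun y => Nat.find (hex y), measurable_find hex fun n => ?_,
    fun y => Nat.find_spec (hex y)⟩
  exact measurableSet_setOfPred.2 <|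
    (measurableSet_lt hsup measurable_const).mem.imp
      (measurableSet_le hsup ((hf n).const_mul 2)).mem

theorem stronglyMeasurable_of_measurable_index {F : Type*} [TopologicalSpace F]
    [TopologicalSpace.PseudoMetrizableSpace F] {v : ℕ → Y → F}
    (hv : ∀ n, StronglyMeasurable (v n)) {k : Y → ℕ} (hk : Measurable k) :
    StronglyMeasurable fun y => v (k y) y :=
  (stronglyMeasurable_uncurry_of_continuous_of_stronglyMeasurable
    (fun _ => continuous_of_discreteTopology) hv).comp_measurable (hk.prodMk measurable_id)

theorem Filter.Tendsto.iSup_enorm_lt_top {E : Type*} [NormedAddCommGroup E] {x : ℕ → E} {a : E}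
    (hx : Tendsto x atTop (𝓝 a)) : ⨆ n, ‖x n‖ₑ < ∞ := by
  obtain ⟨C, hC⟩ := hx.norm.bddAbove_range
  refine lt_of_le_of_lt (iSup_le fun n => ?_) (ENNReal.ofReal_lt_top (r := C))
  rw [← ofReal_norm]
  exact ENNReal.ofReal_le_ofReal (hC ⟨n, rfl⟩)

variable {F₁ F₂ : Type*} [NormedAddCommGroup F₁] [NormedAddCommGroup F₂] {p r : ℝ≥0∞}

theorem memLp_of_forall_exists_eq (hp0 : p ≠ 0) (hp : p ≠ ∞) {u w : Y → F₁} {v : ℕ → Y → F₁}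
    (hu : MemLp u p μ) (hv : ∀ n, AEStronglyMeasurable (v n) μ) (hw : AEStronglyMeasurable w μ)
    (hsel : ∀ y, ∃ n, w y = v n y)
    (hsum : ∑' n, ∫⁻ y, ‖v n y - u y‖ₑ ^ p.toReal ∂μ ≠ ∞) :
    MemLp w p μ := by
  have hdiff : ∫⁻ y, ‖w y - u y‖ₑ ^ p.toReal ∂μ < ∞ := by
    refine lt_of_le_of_lt ?_ hsum.lt_top
    calc ∫⁻ y, ‖w y - u y‖ₑ ^ p.toReal ∂μ
        ≤ ∫⁻ y, ∑' n, ‖v n y - u y‖ₑ ^ p.toReal ∂μ := by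
          refine lintegral_mono fun y => ?_
          obtain ⟨n, hn⟩ := hsel y
          rw [hn]
          exact ENNReal.le_tsum n
      _ = ∑' n, ∫⁻ y, ‖v n y - u y‖ₑ ^ p.toReal ∂μ :=
          lintegral_tsum fun n => ((hv n).sub hu.1).enorm.pow_const _
  have hwu : MemLp (w - u) p μ :=
    ⟨hw.sub hu.1, (eLpNorm_lt_top_iff_lintegral_rpow_enorm_lt_top hp0 hp).2 hdiff⟩
  simpa using hu.add hwu

theorem tendsto_eLpNorm_sub_of_dominated {F : Type*} [NormedAddCommGroup F] (hr0 : r ≠ 0)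
    (hr : r ≠ ∞) {f : ℕ → Y → F} {f₀ : Y → F} {H : Y → ℝ≥0∞}
    (hf : ∀ n, AEStronglyMeasurable (f n) μ) (hf₀ : AEStronglyMeasurable f₀ μ)
    (hH : ∫⁻ y, H y ^ r.toReal ∂μ ≠ ∞) (hbound : ∀ n, ∀ᵐ y ∂μ, ‖f n y‖ₑ ≤ H y)
    (hlim : ∀ᵐ y ∂μ, Tendsto (fun n => f n y) atTop (𝓝 (f₀ y))) :
    Tendsto (fun n => eLpNorm (f n - f₀) r μ) atTop (𝓝 0) := by
  have hr' : 0 < r.toReal := ENNReal.toReal_pos hr0 hr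
  have hbound₀ : ∀ᵐ y ∂μ, ‖f₀ y‖ₑ ≤ H y := by
    filter_upwards [ae_all_iff.2 hbound, hlim] with y hy hy'
    exact le_of_tendsto' (continuous_enorm.tendsto _ |>.comp hy') hy
  have hsub : ∀ n, ∀ᵐ y ∂μ, ‖f n y - f₀ y‖ₑ ^ r.toReal ≤ 2 ^ r.toReal * H y ^ r.toReal := by
    intro n
    filter_upwards [hbound n, hbound₀] with y hy hy₀
    rw [← ENNReal.mul_rpow_of_nonneg _ _ hr'.le, two_mul]
    gcongr
    exact (enorm_sub_le).trans (add_le_add hy hy₀)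
  have hpow : ∀ᵐ y ∂μ, Tendsto (fun n => ‖f n y - f₀ y‖ₑ ^ r.toReal) atTop (𝓝 0) := by
    filter_upwards [hlim] with y hy
    have := ((continuous_enorm.tendsto (0 : F)).comp
      (tendsto_sub_nhds_zero_iff.2 hy)).ennrpow_const r.toReal
    simpa [ENNReal.zero_rpow_of_pos hr'] using this
  have hint : Tendsto (fun n => ∫⁻ y, ‖f n y - f₀ y‖ₑ ^ r.toReal ∂μ) atTop (𝓝 0) := by
    simpa using tendsto_lintegral_of_dominated_convergence' _
      (fun n => ((hf n).sub hf₀).enorm.pow_const _) hsub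
      (by rw [lintegral_const_mul' _ _ (by simp)]; exact ENNReal.mul_ne_top (by simp) hH) hpow
  have := hint.ennrpow_const (1 / r.toReal)
  simp only [ENNReal.zero_rpow_of_pos (one_div_pos.2 hr')] at this
  refine this.congr fun n => ?_
  rw [eLpNorm_eq_lintegral_rpow_enorm_toReal hr0 hr]
  rfl

theorem exists_subseq_tsum_lintegral_ne_top_and_ae_tendsto (hp0 : p ≠ 0) (hp : p ≠ ∞)
    {u : Y → F₁} {v : ℕ → Y → F₁} (hv : ∀ n, AEStronglyMeasurable (v n) μ)
    (hu : AEStronglyMeasurable u μ) (h : Tendsto (fun n => eLpNorm (v n - u) p μ) atTop (𝓝 0)) :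
    ∃ φ : ℕ → ℕ, StrictMono φ ∧ ∑' n, ∫⁻ y, ‖v (φ n) y - u y‖ₑ ^ p.toReal ∂μ ≠ ∞ ∧
      ∀ᵐ y ∂μ, Tendsto (fun n => v (φ n) y) atTop (𝓝 (u y)) := by
  have hp' : 0 < p.toReal := ENNReal.toReal_pos hp0 hp
  obtain ⟨φ₁, hφ₁, hae⟩ := (tendstoInMeasure_of_tendsto_eLpNorm hp0 hv hu h).exists_seq_tendsto_ae
  have hint : Tendsto (fun n => ∫⁻ y, ‖v (φ₁ n) y - u y‖ₑ ^ p.toReal ∂μ) atTop (𝓝 0) := by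
    have := (h.comp hφ₁.tendsto_atTop).ennrpow_const p.toReal
    rw [ENNReal.zero_rpow_of_pos hp'] at this
    refine this.congr fun n => ?_
    rw [Function.comp_apply, eLpNorm_eq_lintegral_rpow_enorm_toReal hp0 hp, ← ENNReal.rpow_mul,
      one_div_mul_cancel hp'.ne', ENNReal.rpow_one]
    rfl
  have hpos (n : ℕ) : (0 : ℝ≥0∞) < 2⁻¹ ^ n :=
    ENNReal.pow_pos (ENNReal.inv_pos.2 ENNReal.ofNat_ne_top) n
  obtain ⟨φ₂, hφ₂, hsmall⟩ := extraction_forall_of_eventually fun n =>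
    (hint.eventually_lt_const (hpos n)).mono fun _ hk => hk.le
  refine ⟨φ₁ ∘ φ₂, hφ₁.comp hφ₂, ?_, hae.mono fun y hy => hy.comp hφ₂.tendsto_atTop⟩
  refine ne_top_of_le_ne_top ?_ (ENNReal.tsum_le_tsum hsmall)
  rw [ENNReal.tsum_geometric, ENNReal.one_sub_inv_two, inv_inv]
  exact ENNReal.ofNat_ne_top

theorem lintegral_iSup_enorm_rpow_ne_top (hp0 : p ≠ 0) (hp : p ≠ ∞) (hr0 : r ≠ 0) (hr : r ≠ ∞)
    {g : Y → F₁ → F₂} (hg : ∀ w : Y → F₁, MemLp w p μ → MemLp (fun y => g y (w y)) r μ)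
    {u : Y → F₁} {v : ℕ → Y → F₁} (hu : MemLp u p μ) (hv : ∀ n, StronglyMeasurable (v n))
    (hsum : ∑' n, ∫⁻ y, ‖v n y - u y‖ₑ ^ p.toReal ∂μ ≠ ∞)
    (hbdd : ∀ᵐ y ∂μ, ⨆ n, ‖g y (v n y)‖ₑ < ∞) :
    ∫⁻ y, (⨆ n, ‖g y (v n y)‖ₑ) ^ r.toReal ∂μ ≠ ∞ := by
  have hr' : 0 < r.toReal := ENNReal.toReal_pos hr0 hr
  have hmemLp {w : Y → F₁} (hw : StronglyMeasurable w) (hsel : ∀ y, ∃ n, w y = v n y) :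
      MemLp w p μ :=
    memLp_of_forall_exists_eq hp0 hp hu (fun n => (hv n).aestronglyMeasurable)
      hw.aestronglyMeasurable hsel hsum
  have hG : ∀ n, AEStronglyMeasurable (fun y => g y (v n y)) μ := fun n =>
    (hg _ (hmemLp (hv n) fun _ => ⟨n, rfl⟩)).1
  obtain ⟨k, hk, hkmax⟩ :=
    exists_measurable_index_iSup_le_two_mul fun n => (hG n).stronglyMeasurable_mk.enorm
  set w : Y → F₁ := fun y => v (k y) y
  have hgw := hg w (hmemLp (stronglyMeasurable_of_measurable_index hv hk) fun y => ⟨k y, rfl⟩)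
  have hle : ∀ᵐ y ∂μ, ⨆ n, ‖g y (v n y)‖ₑ ≤ 2 * ‖g y (w y)‖ₑ := by
    filter_upwards [ae_all_iff.2 fun n => (hG n).ae_eq_mk, hbdd] with y hmk hy
    simp only [w, hmk] at hy ⊢
    exact hkmax y hy
  refine ne_top_of_le_ne_top ?_
    (lintegral_mono_ae (hle.mono fun y hy => ENNReal.rpow_le_rpow hy hr'.le))
  simp_rw [ENNReal.mul_rpow_of_nonneg _ _ hr'.le]
  rw [lintegral_const_mul' _ _ (by simp)]
  exact ENNReal.mul_ne_top (by simp)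
    (lintegral_rpow_enorm_lt_top_of_eLpNorm_lt_top hr0 hr hgw.2).ne

theorem tendsto_eLpNorm_comp_sub_of_tsum_lintegral_ne_top (hp0 : p ≠ 0) (hp : p ≠ ∞)
    (hr0 : r ≠ 0) (hr : r ≠ ∞)
    {g : Y → F₁ → F₂} (hg : ∀ w : Y → F₁, MemLp w p μ → MemLp (fun y => g y (w y)) r μ)
    (hcont : ∀ᵐ y ∂μ, Continuous (g y))
    {u : Y → F₁} {v : ℕ → Y → F₁} (hu : MemLp u p μ) (hv : ∀ n, StronglyMeasurable (v n))
    (hsum : ∑' n, ∫⁻ y, ‖v n y - u y‖ₑ ^ p.toReal ∂μ ≠ ∞)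
    (hae : ∀ᵐ y ∂μ, Tendsto (fun n => v n y) atTop (𝓝 (u y))) :
    Tendsto (fun n => eLpNorm ((fun y => g y (v n y)) - fun y => g y (u y)) r μ) atTop (𝓝 0) := by
  have hconv : ∀ᵐ y ∂μ, Tendsto (fun n => g y (v n y)) atTop (𝓝 (g y (u y))) := by
    filter_upwards [hcont, hae] with y hc hy
    exact (hc.tendsto _).comp hy
  have hvLp : ∀ n, MemLp (v n) p μ := fun n =>
    memLp_of_forall_exists_eq hp0 hp hu (fun m => (hv m).aestronglyMeasurable)
      (hv n).aestronglyMeasurable (fun _ => ⟨n, rfl⟩) hsum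
  exact tendsto_eLpNorm_sub_of_dominated hr0 hr (fun n => (hg _ (hvLp n)).1) (hg u hu).1
    (lintegral_iSup_enorm_rpow_ne_top hp0 hp hr0 hr hg hu hv hsum
      (hconv.mono fun _ hy => hy.iSup_enorm_lt_top))
    (fun n => ae_of_all _ fun y => le_iSup (fun m => ‖g y (v m y)‖ₑ) n) hconv

end

theorem stmt9_general {Y : Type*} [MeasurableSpace Y] (μ : Measure Y)
    {F₁ F₂ : Type*}
    [NormedAddCommGroup F₁]
    [NormedAddCommGroup F₂]
    (p r : ℝ≥0∞) [Fact (1 ≤ p)] [Fact (1 ≤ r)] (hp2 : p ≠ ⊤) (hr2 : r ≠ ⊤)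
    (g : Y → F₁ → F₂)
    (hcont : ∀ᵐ y ∂μ, Continuous (fun v => g y v))
    (hmaps : ∀ u : Lp F₁ p μ, MemLp (fun y => g y (u y)) r μ) :
    ∃ G : Lp F₁ p μ → Lp F₂ r μ,
      (∀ u : Lp F₁ p μ, (G u : Y → F₂) =ᵐ[μ] fun y => g y (u y)) ∧
      Continuous G := by
  have hp0 : p ≠ 0 := (zero_lt_one.trans_le Fact.out).ne'
  have hr0 : r ≠ 0 := (zero_lt_one.trans_le Fact.out).ne'
  have hg : ∀ w : Y → F₁, MemLp w p μ → MemLp (fun y => g y (w y)) r μ := fun w hw =>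
    (hmaps (hw.toLp w)).ae_eq (hw.coeFn_toLp.mono fun y hy => by rw [hy])
  refine ⟨fun u => (hmaps u).toLp _, fun u => (hmaps u).coeFn_toLp, ?_⟩
  refine continuous_iff_seqContinuous.2 fun us u₀ hlim => ?_
  rw [Lp.tendsto_Lp_iff_tendsto_eLpNorm'] at hlim ⊢
  refine tendsto_of_subseq_tendsto fun ns hns => ?_
  obtain ⟨φ, -, hsum, hae⟩ := exists_subseq_tsum_lintegral_ne_top_and_ae_tendsto hp0 hp2
    (fun n => Lp.aestronglyMeasurable (us (ns n))) (Lp.aestronglyMeasurable u₀) (hlim.comp hns)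
  refine ⟨φ, (tendsto_eLpNorm_comp_sub_of_tsum_lintegral_ne_top hp0 hp2 hr0 hr2 hg hcont
    (Lp.memLp u₀) (fun n => Lp.stronglyMeasurable _) hsum hae).congr fun n => ?_⟩
  exact eLpNorm_congr_ae (((hmaps _).coeFn_toLp).sub (hmaps u₀).coeFn_toLp).symm

/-- Continuity of the Nemytskii (superposition) operator: if `g : Y × F₁ → F₂` is a
Carathéodory mapping on a σ-finite measure space `(Y, μ)` with `F₁, F₂` separable Banach
spaces, and if `u ↦ g(·, u(·))` maps `L^p(Y; F₁)` into `L^r(Y; F₂)` (`1 ≤ p, r < ∞`), then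
the induced operator `G : L^p(Y; F₁) → L^r(Y; F₂)` is continuous for the norm topologies. -/
theorem stmt9 {Y : Type*} [MeasurableSpace Y] (μ : Measure Y) [SigmaFinite μ]
    {F₁ F₂ : Type*}
    [NormedAddCommGroup F₁] [NormedSpace ℝ F₁] [CompleteSpace F₁]
    [TopologicalSpace.SeparableSpace F₁]
    [NormedAddCommGroup F₂] [NormedSpace ℝ F₂] [CompleteSpace F₂]
    [TopologicalSpace.SeparableSpace F₂]
    (p r : ℝ≥0∞) [Fact (1 ≤ p)] [Fact (1 ≤ r)] (hp2 : p ≠ ⊤) (hr2 : r ≠ ⊤)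
    (g : Y → F₁ → F₂)
    (hmeas : ∀ v : F₁, AEStronglyMeasurable (fun y => g y v) μ)
    (hcont : ∀ᵐ y ∂μ, Continuous (fun v => g y v))
    (hmaps : ∀ u : Lp F₁ p μ, MemLp (fun y => g y (u y)) r μ) :
    ∃ G : Lp F₁ p μ → Lp F₂ r μ,
      (∀ u : Lp F₁ p μ, (G u : Y → F₂) =ᵐ[μ] fun y => g y (u y)) ∧
      Continuous G :=
  stmt9_general μ p r hp2 hr2 g hcont hmaps
end

section
/- Let (Ω, ℱ, ℙ) be a probability space and X a Polish space (a separable complete metric space, with metric d). A sequence (x_n)_{n ≥ 0} of X-valued random variables converges in probability — i.e. there exists an X-valued random variable x such that ℙ(d(x_n, x) > δ) → 0 as n → ∞ for every δ > 0 — if and only if the following holds: for every pair of subsequences (x_{n_k})_k and (x_{m_k})_k, there exists a further subsequence (k_j)_j such that the joint laws of (x_{n_{k_j}}, x_{m_{k_j}}) on X × X converge weakly to some Borel probability measure ν on X × X satisfying ν({(u, v) ∈ X × X : u = v}) = 1. -/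
/-!
If `xₙ → x` in probability, then along any two subsequences the pairs `(x_{nₖ}, x_{mₖ})`
converge in probability to `(x, x)`, hence in law to the law of `(x, x)`, which lives on the
diagonal. Conversely, if the laws of `(x_{nₖ}, x_{mₖ})` converge weakly to a measure `ν` on the
diagonal, the portmanteau bound for the closed set `{δ ≤ d(u, v)}`, which is `ν`-null, gives
`ℙ(δ ≤ d(x_{nₖ}, x_{mₖ})) → 0`. Since every pair of subsequences has such a further subsequence,
`(xₙ)` is Cauchy in probability. A sequence that is Cauchy in probability has a subsequence with
summable probabilities `ℙ(2⁻ᵏ ≤ d(x_{nₖ}, x_{nₖ₊₁}))`; by Borel–Cantelli and completeness it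
converges almost surely, and its limit is then the limit in probability of the whole sequence.
-/

open MeasureTheory Filter Topology
open scoped BoundedContinuousFunction

namespace MeasureTheory

variable {α E : Type*} {mα : MeasurableSpace α} {μ : Measure α}

theorem TendstoInMeasure.prodMk {ι F : Type*} [PseudoEMetricSpace E] [PseudoEMetricSpace F]
    {l : Filter ι} {f : ι → α → E} {g : ι → α → F} {x : α → E} {y : α → F}
    (hf : TendstoInMeasure μ f l x) (hg : TendstoInMeasure μ g l y) :
    TendstoInMeasure μ (fun i ω => (f i ω, g i ω)) l (fun ω => (x ω, y ω)) := by
  intro ε hε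
  refine tendsto_of_tendsto_of_tendsto_of_le_of_le tendsto_const_nhds
    (by simpa using (hf ε hε).add (hg ε hε)) (fun _ => zero_le) fun i => ?_
  calc μ {ω | ε ≤ edist (f i ω, g i ω) (x ω, y ω)}
      = μ ({ω | ε ≤ edist (f i ω) (x ω)} ∪ {ω | ε ≤ edist (g i ω) (y ω)}) := by
        simp only [Prod.edist_eq, le_max_iff, Set.ofPred_or]
    _ ≤ _ := measure_union_le _ _

theorem TendstoInMeasure.tendsto_integral_map {ι : Type*} [PseudoEMetricSpace E]
    [MeasurableSpace E] [BorelSpace E] [IsProbabilityMeasure μ] {l : Filter ι}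
    [l.IsCountablyGenerated] [l.NeBot] {f : ι → α → E} {g : α → E}
    (hfg : TendstoInMeasure μ f l g) (hf : ∀ i, AEMeasurable (f i) μ) (φ : E →ᵇ ℝ) :
    Tendsto (fun i => ∫ z, φ z ∂(μ.map (f i))) l (𝓝 (∫ z, φ z ∂(μ.map g))) :=
  ProbabilityMeasure.tendsto_iff_forall_integral_tendsto.1 (hfg.tendstoInDistribution hf).tendsto φ

theorem ProbabilityMeasure.tendsto_measure_of_isClosed_of_measure_eq_zero {ι : Type*}
    {L : Filter ι} [TopologicalSpace E] [MeasurableSpace E] [OpensMeasurableSpace E]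
    [HasOuterApproxClosed E] {μs : ι → ProbabilityMeasure E} {ν : ProbabilityMeasure E}
    (h : Tendsto μs L (𝓝 ν)) {F : Set E} (hF : IsClosed F) (hνF : (ν : Measure E) F = 0) :
    Tendsto (fun i => (μs i : Measure E) F) L (𝓝 0) :=
  tendsto_of_le_liminf_of_limsup_le zero_le
    ((ProbabilityMeasure.limsup_measure_closed_le_of_tendsto h hF).trans_eq hνF)

theorem tendsto_measure_dist_ge_of_tendsto_integral_map {ι : Type*} {L : Filter ι}
    [IsProbabilityMeasure μ] [MetricSpace E] [SecondCountableTopology E] [MeasurableSpace E]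
    [BorelSpace E] {f g : ι → α → E} (hf : ∀ i, Measurable (f i)) (hg : ∀ i, Measurable (g i))
    {ν : Measure (E × E)} [IsProbabilityMeasure ν] (hν : ν {z | z.1 = z.2} = 1)
    (h : ∀ φ : (E × E) →ᵇ ℝ,
      Tendsto (fun i => ∫ z, φ z ∂(μ.map fun ω => (f i ω, g i ω))) L (𝓝 (∫ z, φ z ∂ν)))
    {δ : ℝ} (hδ : 0 < δ) :
    Tendsto (fun i => μ {ω | δ ≤ dist (f i ω) (g i ω)}) L (𝓝 0) := by
  have hfg i : Measurable fun ω => (f i ω, g i ω) := (hf i).prodMk (hg i)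
  let μs i : ProbabilityMeasure (E × E) :=
    ⟨μ.map fun ω => (f i ω, g i ω), Measure.isProbabilityMeasure_map (hfg i).aemeasurable⟩
  have hF : IsClosed {z : E × E | δ ≤ dist z.1 z.2} :=
    isClosed_le continuous_const (continuous_fst.dist continuous_snd)
  have hνF : ν {z : E × E | δ ≤ dist z.1 z.2} = 0 := by
    have hoff : ν {z : E × E | z.1 = z.2}ᶜ = 0 :=
      (prob_compl_eq_zero_iff (isClosed_eq continuous_fst continuous_snd).measurableSet).2 hν
    refine measure_mono_null ?_ hoff
    rintro z (hz : δ ≤ dist z.1 z.2) (heq : z.1 = z.2)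
    rw [heq, dist_self] at hz
    exact hδ.not_ge hz
  exact (ProbabilityMeasure.tendsto_measure_of_isClosed_of_measure_eq_zero (μs := μs)
    (ν := ⟨ν, ‹_›⟩) (ProbabilityMeasure.tendsto_iff_forall_integral_tendsto.2 h) hF hνF).congr
    fun i => Measure.map_apply (hfg i) hF.measurableSet

def CauchyInMeasure [PseudoMetricSpace E] (μ : Measure α) (f : ℕ → α → E) : Prop :=
  ∀ δ : ℝ, 0 < δ → Tendsto (fun pq : ℕ × ℕ => μ {ω | δ ≤ dist (f pq.1 ω) (f pq.2 ω)}) atTop (𝓝 0)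

theorem cauchyInMeasure_of_forall_exists_subseq [PseudoMetricSpace E] {f : ℕ → α → E}
    (h : ∀ n m : ℕ → ℕ, StrictMono n → StrictMono m → ∃ j : ℕ → ℕ, ∀ δ : ℝ, 0 < δ →
      Tendsto (fun i => μ {ω | δ ≤ dist (f (n (j i)) ω) (f (m (j i)) ω)}) atTop (𝓝 0)) :
    CauchyInMeasure μ f := by
  intro δ hδ
  refine tendsto_of_subseq_tendsto fun ns hns => ?_
  rw [← prod_atTop_atTop_eq] at hns
  obtain ⟨φ, hφ, hφ₁⟩ := strictMono_subseq_of_tendsto_atTop (tendsto_fst.comp hns)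
  obtain ⟨ψ, hψ, hψ₂⟩ := strictMono_subseq_of_tendsto_atTop
    ((tendsto_snd.comp hns).comp hφ.tendsto_atTop)
  obtain ⟨j, hj⟩ := h _ _ (hφ₁.comp hψ) hψ₂
  exact ⟨φ ∘ ψ ∘ j, hj δ hδ⟩

namespace CauchyInMeasure

variable [PseudoMetricSpace E] {f : ℕ → α → E}

theorem exists_strictMono_measure_dist_le (hf : CauchyInMeasure μ f) :
    ∃ ns : ℕ → ℕ, StrictMono ns ∧ ∀ k,
      μ {ω | (2⁻¹ : ℝ) ^ k ≤ dist (f (ns k) ω) (f (ns (k + 1)) ω)} ≤ 2⁻¹ ^ k := by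
  have hN k : ∃ N, ∀ p ≥ N, ∀ q ≥ N,
      μ {ω | (2⁻¹ : ℝ) ^ k ≤ dist (f p ω) (f q ω)} ≤ 2⁻¹ ^ k :=
    eventually_atTop_prod_self'.1 <| (ENNReal.tendsto_nhds_zero.1 (hf _ (by positivity))) _
      (by simp [pos_iff_ne_zero])
  obtain ⟨ns, hns, hle⟩ := extraction_forall_of_eventually' fun k =>
    (hN k).imp fun N hN N' hN' p hp q hq => hN p (hN'.trans hp) q (hN'.trans hq)
  exact ⟨ns, hns, fun k => hle k _ le_rfl _ (hns.monotone k.le_succ)⟩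

theorem exists_strictMono_ae_cauchySeq (hf : CauchyInMeasure μ f) :
    ∃ ns : ℕ → ℕ, StrictMono ns ∧ ∀ᵐ ω ∂μ, CauchySeq fun k => f (ns k) ω := by
  obtain ⟨ns, hns, hle⟩ := hf.exists_strictMono_measure_dist_le
  refine ⟨ns, hns, ?_⟩
  have hsum : ∑' k, μ {ω | (2⁻¹ : ℝ) ^ k ≤ dist (f (ns k) ω) (f (ns (k + 1)) ω)} ≠ ⊤ :=
    ne_top_of_le_ne_top (by simp [ENNReal.tsum_geometric]) (ENNReal.tsum_le_tsum hle)
  filter_upwards [ae_eventually_notMem hsum] with ω hω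
  refine cauchySeq_of_summable_dist <| Summable.of_norm_bounded_eventually_nat
    (summable_geometric_of_lt_one (by norm_num) (by norm_num : (2⁻¹ : ℝ) < 1)) ?_
  filter_upwards [hω] with k hk
  simpa using (not_le.1 hk).le

theorem tendstoInMeasure_of_subseq (hf : CauchyInMeasure μ f) {ns : ℕ → ℕ}
    (hns : Tendsto ns atTop atTop) {g : α → E}
    (hg : TendstoInMeasure μ (fun k => f (ns k)) atTop g) : TendstoInMeasure μ f atTop g := by
  rw [tendstoInMeasure_iff_dist] at hg ⊢
  intro δ hδ
  rw [ENNReal.tendsto_atTop_zero]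
  intro ε hε
  obtain ⟨N, hN⟩ := eventually_atTop_prod_self'.1 <|
    ENNReal.tendsto_nhds_zero.1 (hf (δ / 2) (by positivity)) (ε / 2) (ENNReal.half_pos hε.ne')
  obtain ⟨k, hk, hkN⟩ := ((ENNReal.tendsto_nhds_zero.1 (hg (δ / 2) (by positivity)) (ε / 2)
    (ENNReal.half_pos hε.ne')).and (hns.eventually_ge_atTop N)).exists
  refine ⟨N, fun p hp => ?_⟩
  calc μ {ω | δ ≤ dist (f p ω) (g ω)}
      ≤ μ ({ω | δ / 2 ≤ dist (f p ω) (f (ns k) ω)} ∪ {ω | δ / 2 ≤ dist (f (ns k) ω) (g ω)}) := by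
        refine measure_mono fun ω (hω : δ ≤ _) => ?_
        by_contra! hlt
        simp only [Set.mem_union, Set.mem_ofPred_eq, not_or, not_le] at hlt
        linarith [dist_triangle (f p ω) (f (ns k) ω) (g ω)]
    _ ≤ ε / 2 + ε / 2 := (measure_union_le _ _).trans (add_le_add (hN p hp _ hkN) hk)
    _ = ε := ENNReal.add_halves ε

theorem exists_tendstoInMeasure [CompleteSpace E] [SecondCountableTopology E] [MeasurableSpace E]
    [BorelSpace E] [IsFiniteMeasure μ] (hf : CauchyInMeasure μ f)
    (hf_meas : ∀ n, AEMeasurable (f n) μ) :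
    ∃ g : α → E, Measurable g ∧ TendstoInMeasure μ f atTop g := by
  obtain ⟨ns, hns, hcauchy⟩ := hf.exists_strictMono_ae_cauchySeq
  obtain ⟨g, hg, hlim⟩ := measurable_limit_of_tendsto_metrizable_ae
    (fun k => hf_meas (ns k)) (hcauchy.mono fun _ => cauchySeq_tendsto_of_complete)
  exact ⟨g, hg, hf.tendstoInMeasure_of_subseq hns.tendsto_atTop <|
    tendstoInMeasure_of_tendsto_ae (fun k => (hf_meas (ns k)).aestronglyMeasurable) hlim⟩

end CauchyInMeasure

end MeasureTheory

/-- Criterion for convergence in probability on a Polish space (Gyöngy–Krylov): a sequence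
of `X`-valued random variables converges in probability if and only if for every pair of
subsequences there is a further subsequence along which the joint laws converge weakly to a
probability measure concentrated on the diagonal of `X × X`. -/
theorem stmt17 {Ω : Type*} [MeasurableSpace Ω] (P : Measure Ω) [IsProbabilityMeasure P]
    {X : Type*} [MetricSpace X] [CompleteSpace X] [TopologicalSpace.SeparableSpace X]
    [MeasurableSpace X] [BorelSpace X]
    (xs : ℕ → Ω → X) (hxs : ∀ n, Measurable (xs n)) :
    (∃ x : Ω → X, Measurable x ∧ TendstoInMeasure P xs atTop x) ↔
    (∀ n m : ℕ → ℕ, StrictMono n → StrictMono m →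
      ∃ (j : ℕ → ℕ) (ν : Measure (X × X)),
        StrictMono j ∧ IsProbabilityMeasure ν ∧
        ν {z : X × X | z.1 = z.2} = 1 ∧
        ∀ φ : BoundedContinuousFunction (X × X) ℝ,
          Tendsto
            (fun i => ∫ z, φ z ∂(Measure.map (fun ω => (xs (n (j i)) ω, xs (m (j i)) ω)) P))
            atTop (𝓝 (∫ z, φ z ∂ν))) := by
  have : SecondCountableTopology X := UniformSpace.secondCountable_of_separable X
  constructor
  · rintro ⟨x, hx_meas, hx⟩ n m hn hm
    have hxx : Measurable fun ω => (x ω, x ω) := hx_meas.prodMk hx_meas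
    refine ⟨id, P.map fun ω => (x ω, x ω), strictMono_id,
      Measure.isProbabilityMeasure_map hxx.aemeasurable, ?_, ?_⟩
    · rw [Measure.map_apply hxx (isClosed_eq continuous_fst continuous_snd).measurableSet]
      simp
    · exact ((hx.comp hn.tendsto_atTop).prodMk (hx.comp hm.tendsto_atTop)).tendsto_integral_map
        (fun i => ((hxs _).prodMk (hxs _)).aemeasurable)
  · intro h
    refine CauchyInMeasure.exists_tendstoInMeasure ?_ fun n => (hxs n).aemeasurable
    refine cauchyInMeasure_of_forall_exists_subseq fun n m hn hm => ?_
    obtain ⟨j, ν, -, hν, hdiag, hlaw⟩ := h n m hn hm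
    exact ⟨j, fun δ hδ => tendsto_measure_dist_ge_of_tendsto_integral_map
      (fun _ => hxs _) (fun _ => hxs _) hdiag hlaw hδ⟩
end
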